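/- Let X be a real Hilbert space, let A and B be closed linear subspaces of X, and let v ∈ B. Define the sequence (x_k) by x_0 = v and x_{k+1} = x_k − P_B x_k + P_A(P_B x_k + (v − x_k)/2). Then for every k ≥ 1, P_B x_k = (P_B P_A)^k v. -/

import Mathlib

/-!
Writing `P = P_A` and `Q = P_B`, idempotence of `P` gives `P (v - x_{k+1}) = ½ P (v - x_k)`, so
`P (v - x_k) = 0` for all `k` since `x_0 = v`. Idempotence of `Q` then collapses the update to
`Q x_{k+1} = Q P Q x_k + ½ Q P (v - x_k) = (Q P) (Q x_k)`, and `Q x_0 = v` because `v ∈ B`.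
-/

namespace BestApproxDouglasRachford

variable {R M : Type*} [CommRing R] [AddCommGroup M] [Module R M]

/-- The baD–R update is the case `c = 2⁻¹`, `P = P_A`, `Q = P_B`. -/
def step (P Q : Module.End R M) (c : R) (v x : M) : M :=
  x - Q x + P (Q x + c • (v - x))

variable {P Q : Module.End R M} {c : R} {v : M}

theorem map_sub_step (hP : IsIdempotentElem P) (x : M) :
    P (v - step P Q c v x) = (1 - c) • P (v - x) := by
  have hsub : v - step P Q c v x = (v - x) + Q x - P (Q x + c • (v - x)) := by
    simp only [step]
    abel
  have hPP : ∀ y, P (P y) = P y := LinearMap.congr_fun hP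
  rw [hsub, map_sub, map_add, hPP, map_add, map_smul]
  module

theorem map_step (hQ : IsIdempotentElem Q) (x : M) :
    Q (step P Q c v x) = Q (P (Q x)) + c • Q (P (v - x)) := by
  have hQQ : ∀ y, Q (Q y) = Q y := LinearMap.congr_fun hQ
  rw [step, map_add, map_sub, hQQ, sub_self, zero_add, map_add, map_smul, map_add, map_smul]

theorem map_sub_seq_eq_zero (hP : IsIdempotentElem P) (x : ℕ → M) (hx0 : x 0 = v)
    (hx : ∀ k, x (k + 1) = step P Q c v (x k)) (k : ℕ) : P (v - x k) = 0 := by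
  induction k with
  | zero => simp [hx0]
  | succ k ih => rw [hx, map_sub_step hP, ih, smul_zero]

theorem map_seq_eq_iterate_mul (hP : IsIdempotentElem P) (hQ : IsIdempotentElem Q)
    (hv : Q v = v) (x : ℕ → M) (hx0 : x 0 = v) (hx : ∀ k, x (k + 1) = step P Q c v (x k))
    (k : ℕ) : Q (x k) = (⇑(Q * P))^[k] v := by
  induction k with
  | zero => rw [hx0, hv, Function.iterate_zero_apply]
  | succ k ih =>
    rw [hx, map_step hQ, map_sub_seq_eq_zero hP x hx0 hx, map_zero, smul_zero, add_zero,
      Function.iterate_succ_apply', ← ih, Module.End.mul_apply]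

end BestApproxDouglasRachford

open BestApproxDouglasRachford in
theorem stmt_12 {X : Type*} [NormedAddCommGroup X] [InnerProductSpace ℝ X]
    (A B : Submodule ℝ X) [CompleteSpace A] [CompleteSpace B]
    (v : X) (hv : v ∈ B) (x : ℕ → X) (hx0 : x 0 = v)
    (hx : ∀ k, x (k + 1) = x k - (Submodule.orthogonalProjectionOnto B (x k) : X) +
      (Submodule.orthogonalProjectionOnto A
        ((Submodule.orthogonalProjectionOnto B (x k) : X) + (2 : ℝ)⁻¹ • (v - x k)) : X)) :
    ∀ k : ℕ, 1 ≤ k →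
      (Submodule.orthogonalProjectionOnto B (x k) : X) =
        (fun z => (Submodule.orthogonalProjectionOnto B (Submodule.orthogonalProjectionOnto A z : X) : X))^[k] v := by
  intro k _
  exact map_seq_eq_iterate_mul (P := A.starProjection.toLinearMap)
    (ContinuousLinearMap.IsIdempotentElem.toLinearMap A.isIdempotentElem_starProjection)
    (ContinuousLinearMap.IsIdempotentElem.toLinearMap B.isIdempotentElem_starProjection)
    (B.starProjection_eq_self_iff.mpr hv) x hx0 hx k
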